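/- arXiv:1910.07926 — 5 statements merged into one kernel-verified Lean document; each statement's English description precedes it below -/
import Mathlib

section
/- If n·aₙ → 0 as n → ∞ and lim_{x→1⁻} ∑ aₙ xⁿ = s, then the series ∑ aₙ converges to s. -/
/-! Compare the partial sum `S_n = ∑_{i ≤ n} a_i` with `F(x_n)` at `x_n = 1 - 1/(n+1)`; their
difference is `∑_{i ≤ n} a_i (1 - x_n^i) - ∑_{i > n} a_i x_n^i`. By Bernoulli's inequality
`1 - x_n^i ≤ i/(n+1)`, so the first sum is bounded by the Cesàro mean of `i |a_i|`, which tends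
to `0`. Once `|i a_i| ≤ ε` for all `i > n`, the second sum is at most
`ε/(n+1) · ∑ x_n^i = ε`. -/

open Filter Topology Finset

lemma tendsto_zero_of_tendsto_natCast_mul {a : ℕ → ℝ}
    (h : Tendsto (fun n : ℕ => (n : ℝ) * a n) atTop (𝓝 0)) : Tendsto a atTop (𝓝 0) := by
  have := tendsto_inv_atTop_nhds_zero_nat.mul h
  rw [zero_mul] at this
  refine this.congr' ?_
  filter_upwards [eventually_ne_atTop 0] with n hn
  field_simp

lemma summable_mul_pow_of_tendsto_zero {a : ℕ → ℝ} (ha : Tendsto a atTop (𝓝 0)) {x : ℝ}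
    (hx : |x| < 1) : Summable fun i => a i * x ^ i := by
  obtain ⟨C, hC⟩ := ha.norm.bddAbove_range
  refine .of_norm_bounded ((summable_geometric_of_lt_one (abs_nonneg x) hx).mul_left C)
    fun i => ?_
  rw [norm_mul, norm_pow, Real.norm_eq_abs x]
  gcongr
  exact hC ⟨i, rfl⟩

lemma sum_range_sub_tsum_mul_pow {a : ℕ → ℝ} {x : ℝ} (hs : Summable fun i => a i * x ^ i)
    (n : ℕ) : ∑ i ∈ range n, a i - ∑' i, a i * x ^ i =
      ∑ i ∈ range n, a i * (1 - x ^ i) - ∑' i, a (i + n) * x ^ (i + n) := by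
  rw [← hs.sum_add_tsum_nat_add n]
  simp only [mul_one_sub, sum_sub_distrib]
  ring

lemma abs_sum_mul_one_sub_pow_le (a : ℕ → ℝ) {x : ℝ} (hx0 : 0 ≤ x) (hx1 : x ≤ 1)
    (s : Finset ℕ) : |∑ i ∈ s, a i * (1 - x ^ i)| ≤ (1 - x) * ∑ i ∈ s, (i : ℝ) * |a i| := by
  rw [mul_sum]
  refine (abs_sum_le_sum_abs _ _).trans (sum_le_sum fun i _ => ?_)
  have bernoulli := one_add_mul_sub_le_pow (by linarith : -1 ≤ x) i
  rw [abs_mul, abs_of_nonneg (sub_nonneg.2 (pow_le_one₀ hx0 hx1))]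
  calc |a i| * (1 - x ^ i) ≤ |a i| * (i * (1 - x)) := by gcongr; linarith
    _ = (1 - x) * (i * |a i|) := by ring

lemma abs_tsum_mul_pow_add_le {a : ℕ → ℝ} {x c : ℝ} (hx0 : 0 ≤ x) (hx1 : x < 1) (N : ℕ)
    (hc : ∀ i ≥ N, |a i| ≤ c) : |∑' i, a (i + N) * x ^ (i + N)| ≤ c / (1 - x) := by
  have hc0 : 0 ≤ c := (abs_nonneg _).trans (hc N le_rfl)
  rw [div_eq_mul_inv, ← Real.norm_eq_abs]
  refine tsum_of_norm_bounded ((hasSum_geometric_of_lt_one hx0 hx1).mul_left c) fun i => ?_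
  rw [Real.norm_eq_abs, abs_mul, abs_pow, abs_of_nonneg hx0]
  exact mul_le_mul (hc _ (by omega)) (pow_le_pow_of_le_one hx0 hx1.le (by omega))
    (by positivity) hc0

namespace Tauber

noncomputable def point (n : ℕ) : ℝ := 1 - ((n : ℝ) + 1)⁻¹

lemma one_sub_point (n : ℕ) : 1 - point n = ((n : ℝ) + 1)⁻¹ := sub_sub_cancel _ _

lemma point_nonneg (n : ℕ) : 0 ≤ point n :=
  sub_nonneg.2 (inv_le_one_of_one_le₀ (by simp))

lemma point_lt_one (n : ℕ) : point n < 1 :=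
  sub_lt_self _ (by positivity)

lemma tendsto_point : Tendsto point atTop (𝓝[Set.Ico 0 1] 1) := by
  refine tendsto_nhdsWithin_of_tendsto_nhds_of_eventually_within _ ?_
    (.of_forall fun n => ⟨point_nonneg n, point_lt_one n⟩)
  show Tendsto (fun n : ℕ => 1 - ((n : ℝ) + 1)⁻¹) atTop (𝓝 1)
  simpa using tendsto_const_nhds.sub (tendsto_one_div_add_atTop_nhds_zero_nat (𝕜 := ℝ))

variable {a : ℕ → ℝ}

lemma tendsto_sum_mul_one_sub_point_pow
    (h : Tendsto (fun n : ℕ => (n : ℝ) * a n) atTop (𝓝 0)) :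
    Tendsto (fun n => ∑ i ∈ range (n + 1), a i * (1 - point n ^ i)) atTop (𝓝 0) := by
  have hu : Tendsto (fun i : ℕ => (i : ℝ) * |a i|) atTop (𝓝 0) := by
    simpa [abs_mul] using h.abs
  have cesaro : Tendsto (fun n : ℕ => ((n : ℝ) + 1)⁻¹ * ∑ i ∈ range (n + 1), (i : ℝ) * |a i|)
      atTop (𝓝 0) := by
    simpa [Function.comp_def] using hu.cesaro.comp (tendsto_add_atTop_nat 1)
  refine squeeze_zero_norm (fun n => ?_) cesaro
  rw [Real.norm_eq_abs, ← one_sub_point]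
  exact abs_sum_mul_one_sub_pow_le a (point_nonneg n) (point_lt_one n).le _

lemma tendsto_tsum_tail_point (h : Tendsto (fun n : ℕ => (n : ℝ) * a n) atTop (𝓝 0)) :
    Tendsto (fun n => ∑' i, a (i + (n + 1)) * point n ^ (i + (n + 1))) atTop (𝓝 0) := by
  rw [Metric.tendsto_atTop]
  intro ε hε
  obtain ⟨N, hN⟩ := Metric.tendsto_atTop.1 h (ε / 2) (by positivity)
  refine ⟨N, fun n hn => ?_⟩
  have hbound : ∀ i ≥ n + 1, |a i| ≤ ε / 2 / ((n : ℝ) + 1) := by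
    intro i hi
    have hi' : (n : ℝ) + 1 ≤ i := by exact_mod_cast hi
    have := hN i (by omega)
    rw [Real.dist_eq, sub_zero, abs_mul, Nat.abs_cast] at this
    rw [le_div_iff₀ (by positivity)]
    nlinarith [abs_nonneg (a i)]
  rw [Real.dist_eq, sub_zero]
  calc _ ≤ ε / 2 / ((n : ℝ) + 1) / (1 - point n) :=
        abs_tsum_mul_pow_add_le (point_nonneg n) (point_lt_one n) _ hbound
    _ = ε / 2 := by rw [one_sub_point]; field_simp
    _ < ε := half_lt_self hε

end Tauber

open Tauber

theorem tauber_theorem (a : ℕ → ℝ) (s : ℝ)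
    (hTaub : Tendsto (fun n : ℕ => (n : ℝ) * a n) atTop (nhds 0))
    (hF : Tendsto (fun x : ℝ => ∑' i, a i * x^i) (nhdsWithin 1 (Set.Ico (0:ℝ) 1)) (nhds s)) :
    Tendsto (fun n => ∑ i ∈ Finset.range (n+1), a i) atTop (nhds s) := by
  have hsum (n : ℕ) : Summable fun i => a i * point n ^ i :=
    summable_mul_pow_of_tendsto_zero (tendsto_zero_of_tendsto_natCast_mul hTaub)
      ((abs_of_nonneg (point_nonneg n)).trans_lt (point_lt_one n))
  have hdiff : Tendsto (fun n => ∑ i ∈ range (n + 1), a i - ∑' i, a i * point n ^ i) atTop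
      (𝓝 0) := by
    simpa only [sum_range_sub_tsum_mul_pow (hsum _), sub_zero] using
      (tendsto_sum_mul_one_sub_point_pow hTaub).sub (tendsto_tsum_tail_point hTaub)
  simpa using hdiff.add (hF.comp tendsto_point)
end

section
/- If the sequence of partial sums (sₙ) is Cauchy, then for every sequence (xₘ) in [0,1) with xₘ → 1, one has |F(xₘ) − sₙ| → 0 as m,n → ∞ (i.e., for all ε > 0 there is N with |F(xₘ) − sₙ| ≤ ε for all m,n ≥ N). -/
/-! The Cauchy partial sums converge to some `l`, and Abel's limit theorem gives `F x → l` as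
`x → 1⁻`. So `F (x m)` and `s n` share the limit `l`, and their distance tends to `0` as `m` and
`n` tend to infinity jointly. -/

open Filter Topology

lemma exists_forall_ge_dist_le_of_tendsto {α ι : Type*} [PseudoMetricSpace α] [Nonempty ι]
    [Preorder ι] [IsDirectedOrder ι] {f g : ι → α} {l : α}
    (hf : Tendsto f atTop (𝓝 l)) (hg : Tendsto g atTop (𝓝 l)) {ε : ℝ} (hε : 0 < ε) :
    ∃ N, ∀ m n, N ≤ m → N ≤ n → dist (f m) (g n) ≤ ε := by
  have hdist : Tendsto (fun p : ι × ι => dist (f p.1) (g p.2)) atTop (𝓝 0) := by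
    simpa only [prod_atTop_atTop_eq, dist_self, Function.comp_def] using
      (hf.comp tendsto_fst).dist (hg.comp tendsto_snd)
  obtain ⟨N, hN⟩ := eventually_atTop_prod_self'.mp (hdist.eventually (eventually_le_nhds hε))
  exact ⟨N, fun m n hm hn => hN m hm n hn⟩

lemma tendsto_tsum_powerSeries_comp_of_tendsto_one {a : ℕ → ℝ} {l : ℝ}
    (ha : Tendsto (fun n => ∑ i ∈ Finset.range n, a i) atTop (𝓝 l))
    {x : ℕ → ℝ} (hx_lt : ∀ m, x m < 1) (hx : Tendsto x atTop (𝓝 1)) :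
    Tendsto (fun m => ∑' i, a i * x m ^ i) atTop (𝓝 l) :=
  (Real.tendsto_tsum_powerSeries_nhdsWithin_lt ha).comp
    (tendsto_nhdsWithin_of_tendsto_nhds_of_eventually_within _ hx (.of_forall hx_lt))

theorem abel_cauchy_variant (a : ℕ → ℝ)
    (hC : CauchySeq (fun n => ∑ i ∈ Finset.range (n+1), a i)) :
    ∀ x : ℕ → ℝ, (∀ m, x m ∈ Set.Ico (0:ℝ) 1) → Tendsto x atTop (nhds 1) →
      ∀ ε : ℝ, 0 < ε → ∃ N, ∀ m n, N ≤ m → N ≤ n →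
        |(∑' i, a i * (x m)^i) - ∑ i ∈ Finset.range (n+1), a i| ≤ ε := by
  intro x hx_mem hx ε hε
  obtain ⟨l, hl⟩ := cauchySeq_tendsto_of_complete hC
  have hF : Tendsto (fun m => ∑' i, a i * x m ^ i) atTop (𝓝 l) :=
    tendsto_tsum_powerSeries_comp_of_tendsto_one ((tendsto_add_atTop_iff_nat 1).mp hl)
      (fun m => (hx_mem m).2) hx
  simpa only [Real.dist_eq] using exists_forall_ge_dist_le_of_tendsto hF hl hε
end

section
/- A sequence (cₙ) of reals is Cauchy if and only if it is metastable: for all ε > 0 and all g : ℕ → ℕ there exists N such that |cₘ − cₙ| ≤ ε for all m, n ∈ [N, N + g(N)]. -/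
theorem cauchy_iff_metastable (c : ℕ → ℝ) :
    CauchySeq c ↔
    ∀ ε : ℝ, 0 < ε → ∀ g : ℕ → ℕ, ∃ N, ∀ m n,
      m ∈ Set.Icc N (N + g N) → n ∈ Set.Icc N (N + g N) → |c m - c n| ≤ ε := by
  constructor
  · intro hc ε hε g
    obtain ⟨N, hN⟩ := Metric.cauchySeq_iff.1 hc ε hε
    exact ⟨N, fun m n hm hn => le_of_lt (by rw [← Real.dist_eq]; exact hN m hm.1 n hn.1)⟩
  · intro h
    by_contra hc
    rw [Metric.cauchySeq_iff] at hc
    push_neg at hc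
    obtain ⟨ε, hε, hN⟩ := hc
    choose m hm n hn hd using hN
    obtain ⟨N, hfin⟩ := h (ε/2) (by linarith) (fun N => max (m N) (n N) - N)
    have hmx : m N ≤ max (m N) (n N) := le_max_left _ _
    have hnx : n N ≤ max (m N) (n N) := le_max_right _ _
    have hmN := hm N
    have hnN := hn N
    have h1 : m N ∈ Set.Icc N (N + (max (m N) (n N) - N)) := ⟨hmN, by omega⟩
    have h2 : n N ∈ Set.Icc N (N + (max (m N) (n N) - N)) := ⟨hnN, by omega⟩
    have := hfin (m N) (n N) h1 h2
    have hd' := hd N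
    rw [Real.dist_eq] at hd'
    linarith
end

section
/- If (qₙ) is a sequence of reals and (aₙ) is defined by a₀ := q₀, a₁ := q₁ − q₀, and aₙ := (q_{m+1} − qₘ)/2^{m−1} for n ≥ 2 with m := ⌈log₂ n⌉, then the partial sums satisfy s_{2ⁿ} = q_{n+1} for all n ≥ 1. -/
/-!
On the dyadic block `2ⁿ < i ≤ 2ⁿ⁺¹` we have `⌈log₂ i⌉ = n + 1`, so each of its `2ⁿ` terms equals
`(q (n+2) - q (n+1)) / 2ⁿ` and the block sums to `q (n+2) - q (n+1)`. Since `s₁ = a₀ + a₁ = q₁`,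
the partial sums `s_{2ⁿ}` telescope to `q (n+1)`.
-/

open Finset

theorem Nat.clog_eq_succ_of_pow_lt_of_le_pow {b n i : ℕ} (hb : 1 < b) (hlt : b ^ n < i)
    (hle : i ≤ b ^ (n + 1)) : Nat.clog b i = n + 1 :=
  le_antisymm ((Nat.clog_le_iff_le_pow hb).2 hle) ((Nat.lt_clog_iff_pow_lt hb).2 hlt)

theorem sum_dyadic_block_eq_sub (q a : ℕ → ℝ)
    (han : ∀ n, 2 ≤ n →
      a n = (q (Nat.clog 2 n + 1) - q (Nat.clog 2 n)) / 2 ^ (Nat.clog 2 n - 1)) (n : ℕ) :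
    ∑ i ∈ Ico (2 ^ n + 1) (2 ^ (n + 1) + 1), a i = q (n + 2) - q (n + 1) := by
  have hblock : ∀ i ∈ Ico (2 ^ n + 1) (2 ^ (n + 1) + 1), a i = (q (n + 2) - q (n + 1)) / 2 ^ n := by
    intro i hi
    rw [mem_Ico] at hi
    have hclog : Nat.clog 2 i = n + 1 :=
      Nat.clog_eq_succ_of_pow_lt_of_le_pow one_lt_two (by omega) (by omega)
    rw [han i (by have := Nat.one_le_two_pow (n := n); omega), hclog, Nat.add_sub_cancel]
  have hcard : #(Ico (2 ^ n + 1) (2 ^ (n + 1) + 1)) = 2 ^ n := by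
    rw [Nat.card_Ico, pow_succ]; omega
  rw [sum_congr rfl hblock, sum_const, hcard, nsmul_eq_mul]
  push_cast
  field_simp

theorem specker_partial_sum_identity (q a : ℕ → ℝ)
    (ha0 : a 0 = q 0) (ha1 : a 1 = q 1 - q 0)
    (han : ∀ n, 2 ≤ n →
      a n = (q (Nat.clog 2 n + 1) - q (Nat.clog 2 n)) / 2 ^ (Nat.clog 2 n - 1)) :
    ∀ n, 1 ≤ n → ∑ i ∈ Finset.range (2^n + 1), a i = q (n + 1) := by
  suffices h : ∀ n, ∑ i ∈ range (2 ^ n + 1), a i = q (n + 1) from fun n _ => h n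
  intro n
  induction n with
  | zero => simp [sum_range_succ, ha0, ha1]
  | succ n ih =>
    have hle : 2 ^ n + 1 ≤ 2 ^ (n + 1) + 1 := by
      have := Nat.pow_le_pow_right two_pos n.le_succ; omega
    rw [← sum_range_add_sum_Ico a hle, ih, sum_dyadic_block_eq_sub q a han n]
    ring
end

section
/- With (aₙ) defined from a monotone bounded sequence (qₙ) by a₀ := q₀, a₁ := q₁ − q₀, and aₙ := (q_{m+1} − qₘ)/2^{m−1} for n ≥ 2 with m := ⌈log₂ n⌉: if (qₙ) is monotone increasing and bounded, then n·|aₙ| → 0 as n → ∞, i.e., aₙ = o(1/n). -/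
open Filter Topology

theorem specker_tauber_condition (q a : ℕ → ℝ)
    (hmono : Monotone q) (hbdd : ∃ B, ∀ n, q n ≤ B)
    (ha0 : a 0 = q 0) (ha1 : a 1 = q 1 - q 0)
    (han : ∀ n, 2 ≤ n →
      a n = (q (Nat.clog 2 n + 1) - q (Nat.clog 2 n)) / 2 ^ (Nat.clog 2 n - 1)) :
    Tendsto (fun n : ℕ => (n : ℝ) * |a n|) atTop (nhds 0) := by
  obtain ⟨B, hB⟩ := hbdd
  have hL : Tendsto q atTop (nhds (⨆ n, q n)) :=
    tendsto_atTop_ciSup hmono ⟨B, fun x ⟨n, hn⟩ => hn ▸ hB n⟩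
  have hdiff : Tendsto (fun m => q (m + 1) - q m) atTop (nhds 0) := by
    have := (hL.comp (tendsto_add_atTop_nat 1)).sub hL
    simpa using this
  have hclog : Tendsto (Nat.clog 2) atTop atTop := by
    apply tendsto_atTop_atTop.2
    intro b
    refine ⟨2 ^ b, fun n hn => ?_⟩
    calc b = Nat.clog 2 (2 ^ b) := (Nat.clog_pow 2 b one_lt_two).symm
      _ ≤ Nat.clog 2 n := Nat.clog_mono_right 2 hn
  have hbound : Tendsto (fun n => 2 * (q (Nat.clog 2 n + 1) - q (Nat.clog 2 n)))
      atTop (nhds 0) := by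
    have := (hdiff.comp hclog).const_mul 2
    simpa using this
  refine tendsto_of_tendsto_of_tendsto_of_le_of_le' tendsto_const_nhds hbound ?_ ?_
  · filter_upwards [eventually_ge_atTop 2] with n hn
    positivity
  · filter_upwards [eventually_ge_atTop 2] with n hn
    set m := Nat.clog 2 n with hm
    have hm1 : 1 ≤ m := Nat.clog_pos one_lt_two hn
    have hnle : (n : ℝ) ≤ 2 ^ m := by
      have := Nat.le_pow_clog one_lt_two n
      exact_mod_cast this
    have hdnn : 0 ≤ q (m + 1) - q m := sub_nonneg.2 (hmono (Nat.le_succ m))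
    rw [han n hn, ← hm]
    have hpos : (0:ℝ) < 2 ^ (m - 1) := by positivity
    rw [abs_div, abs_of_nonneg hdnn, abs_of_pos hpos]
    rw [mul_div_assoc', div_le_iff₀ hpos]
    have h2m : (2:ℝ) * (q (m + 1) - q m) * 2 ^ (m - 1) = 2 ^ m * (q (m + 1) - q m) := by
      rw [mul_right_comm]
      congr 1
      rw [← pow_succ']
      congr 1
      omega
    rw [h2m]
    exact mul_le_mul_of_nonneg_right hnle hdnn
end
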